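/- arXiv:2204.00748 — 2 statements merged into one kernel-verified Lean document; each statement's English description precedes it below -/
import Mathlib

section
/- Let $\Phi(t_1,\dots,t_d) = \frac{1}{2}\sum_{i=1}^d c_i t_i^2 - \frac{1}{6}\sum_{i,j=1}^d M_{ij} t_i^3 t_j^3$ with $c_i > 0$, $M$ symmetric with $M_{ii} > 0$ and $M_{ij} \geq 0$ for all $i,j$. If $t^* = (t_1^*,\dots,t_d^*) \in [0,\infty)^d$ is a global maximum point of $\Phi$ on $[0,\infty)^d$, then $t_i^* > 0$ for every $i$. -/
/-!
If `t i = 0`, raising that coordinate to a small `s > 0` changes `Φ` by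
`c i s² / 2 - O(s³)`, which is positive since `c i > 0`; this contradicts maximality.
-/

open Finset Filter Topology Function

noncomputable def energy {ι : Type*} [Fintype ι] (c : ι → ℝ) (M : Matrix ι ι ℝ) (t : ι → ℝ) : ℝ :=
  (1/2) * ∑ i, c i * t i ^ 2 - (1/6) * ∑ i, ∑ j, M i j * t i ^ 3 * t j ^ 3

lemma eventually_mul_pow_add_mul_pow_lt {a : ℝ} (ha : 0 < a) (b m : ℝ) :
    ∀ᶠ s in 𝓝[>] (0 : ℝ), b * s ^ 3 + m * s ^ 6 < a * s ^ 2 := by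
  have hlim : Tendsto (fun s : ℝ => b * s + m * s ^ 4) (𝓝 0) (𝓝 0) := by
    have : Continuous (fun s : ℝ => b * s + m * s ^ 4) := by fun_prop
    simpa using this.tendsto 0
  filter_upwards [nhdsWithin_le_nhds (hlim.eventually (gt_mem_nhds ha)), self_mem_nhdsWithin]
    with s hs (hs0 : 0 < s)
  have := mul_lt_mul_of_pos_left hs (pow_pos hs0 2)
  linear_combination this

lemma update_pow_of_eq_zero {ι : Type*} [DecidableEq ι] {t : ι → ℝ} {i : ι} (ht : t i = 0)
    (s : ℝ) {n : ℕ} (hn : n ≠ 0) (j : ι) :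
    update t i s j ^ n = t j ^ n + if j = i then s ^ n else 0 := by
  rcases eq_or_ne j i with rfl | hj
  · simp [ht, hn]
  · simp [hj]

lemma energy_update_of_eq_zero {ι : Type*} [Fintype ι] [DecidableEq ι] (c : ι → ℝ)
    (M : Matrix ι ι ℝ) {t : ι → ℝ} {i : ι} (ht : t i = 0) (s : ℝ) :
    energy c M (update t i s) = energy c M t + (1/2) * c i * s ^ 2
      - (1/6) * ((∑ j, (M i j + M j i) * t j ^ 3) * s ^ 3 + M i i * s ^ 6) := by
  simp only [energy, update_pow_of_eq_zero ht s two_ne_zero,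
    update_pow_of_eq_zero ht s three_ne_zero, mul_add, add_mul, sum_add_distrib,
    mul_ite, ite_mul, mul_zero, zero_mul, sum_ite_eq', sum_ite_irrel, sum_const_zero, mem_univ, if_true]
  simp only [sum_mul]
  ring_nf

theorem stmt_10_general {d : ℕ} (c : Fin d → ℝ) (M : Matrix (Fin d) (Fin d) ℝ)
    (hc : ∀ i, 0 < c i)
    (Φ : (Fin d → ℝ) → ℝ)
    (hΦ : Φ = fun t => (1/2) * ∑ i, c i * t i ^ 2
        - (1/6) * ∑ i, ∑ j, M i j * t i ^ 3 * t j ^ 3)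
    (tstar : Fin d → ℝ) (htnn : ∀ i, 0 ≤ tstar i)
    (hmax : ∀ t, (∀ i, 0 ≤ t i) → Φ t ≤ Φ tstar) :
    ∀ i, 0 < tstar i := by
  obtain rfl : Φ = energy c M := hΦ
  intro i
  by_contra! hi
  have h0 : tstar i = 0 := le_antisymm hi (htnn i)
  obtain ⟨s, hlt, hs⟩ := ((eventually_mul_pow_add_mul_pow_lt (mul_pos three_pos (hc i))
    (∑ j, (M i j + M j i) * tstar j ^ 3) (M i i)).and self_mem_nhdsWithin).exists
  have hle := hmax (update tstar i s) fun j => by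
    rcases eq_or_ne j i with rfl | hj
    · simpa using hs.le
    · simpa [hj] using htnn j
  rw [energy_update_of_eq_zero c M h0] at hle
  linarith

/-- If `cᵢ > 0`, `M` is symmetric with `Mᵢᵢ > 0` and `Mᵢⱼ ≥ 0`, then any global
maximum point of `Φ` on the nonnegative orthant has all coordinates positive. -/
theorem stmt_10 {d : ℕ} (c : Fin d → ℝ) (M : Matrix (Fin d) (Fin d) ℝ)
    (hc : ∀ i, 0 < c i) (hMsym : M.IsSymm)
    (hMdiag : ∀ i, 0 < M i i) (hMnn : ∀ i j, 0 ≤ M i j)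
    (Φ : (Fin d → ℝ) → ℝ)
    (hΦ : Φ = fun t => (1/2) * ∑ i, c i * t i ^ 2
        - (1/6) * ∑ i, ∑ j, M i j * t i ^ 3 * t j ^ 3)
    (tstar : Fin d → ℝ) (htnn : ∀ i, 0 ≤ tstar i)
    (hmax : ∀ t, (∀ i, 0 ≤ t i) → Φ t ≤ Φ tstar) :
    ∀ i, 0 < tstar i :=
  stmt_10_general c M hc Φ hΦ tstar htnn hmax
end

section
/- Let $a_i, b_i > 0$ for $i = 1,\dots,d$ and $c_{ij} \geq 0$ for $i \neq j$ with $c_{ij} = c_{ji}$, and suppose $6 b_i - 6\sum_{j\neq i} c_{ij} > 0$ for every $i$. Define $\mathcal{J}(t) = \sum_{i=1}^d a_i t_i^2 - \sum_{i=1}^d b_i t_i^6 + \sum_{i\neq j} c_{ij} t_i^3 t_j^3$ on $(0,\infty)^d$. Set $r^4 = \min_i \frac{a_i}{3 b_i}$ and choose $R > 0$ with $2 a_i R - (6 b_i - 6\sum_{j\neq i} c_{ij}) R^5 < 0$ for all $i$. Then any critical point of $\mathcal{J}$ in $(0,\infty)^d$ lies in $[r, R]^d$, and $\sup_{(0,\infty)^d}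 \mathcal{J} = \max_{[r,R]^d} \mathcal{J}$; in particular $\mathcal{J}$ attains its supremum on $(0,\infty)^d$. -/
/-!
Write `𝒥(t) = ∑ aᵢtᵢ² - ∑ bᵢtᵢ⁶ + Q(t³)` with `Q(x) = ∑_{i ≠ j} cᵢⱼxᵢxⱼ`, so that
`∂ᵢ𝒥(t) = 2aᵢtᵢ - 6bᵢtᵢ⁵ + 6tᵢ² ∑_{j ≠ i} cᵢⱼtⱼ³` (`fiberGrad`). The last sum is nonnegative, and
at a largest coordinate it is at most `(∑_{j ≠ i} cᵢⱼ) tᵢ³`. Hence at a critical point every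
coordinate satisfies `aᵢ ≤ 3bᵢtᵢ⁴`, so `tᵢ ≥ r`, and the largest one satisfies
`3(bᵢ - ∑_{j ≠ i} cᵢⱼ) tᵢ⁴ ≤ aᵢ`, so `tᵢ ≤ R`.

For the supremum, raising the coordinates below `r` to `r` and then lowering those above `R` to `R`
never decreases `𝒥`: the first step because `Q` is monotone on the orthant and `a x² - b x⁶`
increases on `[0, r]`; the second because truncating `x ≥ 0` at a level to `y` costs at most
`Q(x) - Q(y) ≤ ∑ᵢ (∑_{j ≠ i} cᵢⱼ)(xᵢ² - yᵢ²)`, which the diagonal dominance and the choice of `R`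
absorb. So the maximum of `𝒥` on the compact box `[r, R]^d` is its supremum over the orthant.
-/

open Finset

theorem Finset.sum_sum_erase_comm {ι M : Type*} [Fintype ι] [DecidableEq ι] [AddCommMonoid M]
    (f : ι → ι → M) :
    ∑ i, ∑ j ∈ univ.erase i, f i j = ∑ i, ∑ j ∈ univ.erase i, f j i :=
  Finset.sum_comm' fun _ _ => by simp [ne_comm]

theorem mul_pow_six_sub_le_mul_sq_sub {α β x y : ℝ} (hβ : 0 ≤ β) (hx : 0 ≤ x) (hxy : x ≤ y)
    (h : 3 * β * y ^ 4 ≤ α) : β * (y ^ 6 - x ^ 6) ≤ α * (y ^ 2 - x ^ 2) := by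
  have hd : 0 ≤ y ^ 2 - x ^ 2 := by nlinarith
  have hS : x ^ 4 + x ^ 2 * y ^ 2 + y ^ 4 ≤ 3 * y ^ 4 := by nlinarith [pow_le_pow_left₀ hx hxy 2]
  calc β * (y ^ 6 - x ^ 6) = β * (x ^ 4 + x ^ 2 * y ^ 2 + y ^ 4) * (y ^ 2 - x ^ 2) := by ring
    _ ≤ β * (3 * y ^ 4) * (y ^ 2 - x ^ 2) := by gcongr
    _ ≤ α * (y ^ 2 - x ^ 2) := by gcongr; linarith

theorem mul_sq_sub_le_mul_pow_six_sub {α β x y : ℝ} (hβ : 0 ≤ β) (hx : 0 ≤ x) (hxy : x ≤ y)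
    (h : α ≤ 3 * β * x ^ 4) : α * (y ^ 2 - x ^ 2) ≤ β * (y ^ 6 - x ^ 6) := by
  have hd : 0 ≤ y ^ 2 - x ^ 2 := by nlinarith
  have hS : 3 * x ^ 4 ≤ x ^ 4 + x ^ 2 * y ^ 2 + y ^ 4 := by nlinarith [pow_le_pow_left₀ hx hxy 2]
  calc α * (y ^ 2 - x ^ 2) ≤ β * (3 * x ^ 4) * (y ^ 2 - x ^ 2) := by gcongr; linarith
    _ ≤ β * (x ^ 4 + x ^ 2 * y ^ 2 + y ^ 4) * (y ^ 2 - x ^ 2) := by gcongr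
    _ = β * (y ^ 6 - x ^ 6) := by ring

namespace FiberMap

variable {ι : Type*} [Fintype ι] [DecidableEq ι]

def coupling (c : ι → ι → ℝ) (x : ι → ℝ) : ℝ :=
  ∑ i, ∑ j ∈ univ.erase i, c i j * x i * x j

variable {c : ι → ι → ℝ}

theorem coupling_mono (hc : ∀ i j, i ≠ j → 0 ≤ c i j) {x y : ι → ℝ} (hx : 0 ≤ x) (hxy : x ≤ y) :
    coupling c x ≤ coupling c y :=
  sum_le_sum fun i _ => sum_le_sum fun j hj => by
    have hcij := hc i j (ne_of_mem_erase hj).symm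
    exact mul_le_mul (mul_le_mul_of_nonneg_left (hxy i) hcij) (hxy j) (hx j)
      (mul_nonneg hcij ((hx i).trans (hxy i)))

theorem coupling_add (hcsym : ∀ i j, c i j = c j i) (x y : ι → ℝ) :
    coupling c (x + y) =
      coupling c x + 2 * ∑ i, y i * ∑ j ∈ univ.erase i, c i j * x j + coupling c y := by
  set S := ∑ i, y i * ∑ j ∈ univ.erase i, c i j * x j
  have hyx : ∑ i, ∑ j ∈ univ.erase i, c i j * y i * x j = S := by
    simp only [S, mul_sum]
    exact sum_congr rfl fun i _ => sum_congr rfl fun j _ => by ring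
  have hxy : ∑ i, ∑ j ∈ univ.erase i, c i j * x i * y j = S := by
    rw [sum_sum_erase_comm, ← hyx]
    exact sum_congr rfl fun i _ => sum_congr rfl fun j _ => by rw [hcsym]; ring
  simp only [coupling, Pi.add_apply, mul_add, add_mul, sum_add_distrib, hxy, hyx]
  ring

theorem coupling_le_sum_mul_sq (hc : ∀ i j, i ≠ j → 0 ≤ c i j) (hcsym : ∀ i j, c i j = c j i)
    (x : ι → ℝ) : coupling c x ≤ ∑ i, (∑ j ∈ univ.erase i, c i j) * x i ^ 2 := by
  have hswap : ∑ i, ∑ j ∈ univ.erase i, c i j * x j ^ 2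
      = ∑ i, ∑ j ∈ univ.erase i, c i j * x i ^ 2 := by
    rw [sum_sum_erase_comm]
    exact sum_congr rfl fun i _ => sum_congr rfl fun j _ => by rw [hcsym]
  calc coupling c x
      ≤ ∑ i, ∑ j ∈ univ.erase i, (c i j * x i ^ 2 + c i j * x j ^ 2) / 2 :=
        sum_le_sum fun i _ => sum_le_sum fun j hj => by
          nlinarith [mul_nonneg (hc i j (ne_of_mem_erase hj).symm) (sq_nonneg (x i - x j))]
    _ = ∑ i, (∑ j ∈ univ.erase i, c i j) * x i ^ 2 := by
        simp only [add_div, sum_add_distrib, ← sum_div, hswap, sum_mul]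
        ring

theorem coupling_sub_le_sum_mul_sq_sub (hc : ∀ i j, i ≠ j → 0 ≤ c i j)
    (hcsym : ∀ i j, c i j = c j i) {x y : ι → ℝ} (hyx : y ≤ x)
    (htop : ∀ i j, y i < x i → y j ≤ y i) :
    coupling c x - coupling c y ≤ ∑ i, (∑ j ∈ univ.erase i, c i j) * (x i ^ 2 - y i ^ 2) := by
  set p := x - y
  have hp : 0 ≤ p := sub_nonneg.2 hyx
  have hcross : ∀ i, p i * ∑ j ∈ univ.erase i, c i j * y j
      ≤ (∑ j ∈ univ.erase i, c i j) * (p i * y i) := by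
    intro i
    rw [mul_sum, sum_mul]
    refine sum_le_sum fun j hj => ?_
    have hcp := mul_nonneg (hc i j (ne_of_mem_erase hj).symm) (hp i)
    rcases (hyx i).lt_or_eq with hlt | heq
    · nlinarith [mul_le_mul_of_nonneg_left (htop i j hlt) hcp]
    · simp [p, heq]
  calc coupling c x - coupling c y = 2 * ∑ i, p i * ∑ j ∈ univ.erase i, c i j * y j
        + coupling c p := by
        rw [← add_sub_cancel y x, coupling_add hcsym]
        ring
    _ ≤ 2 * ∑ i, (∑ j ∈ univ.erase i, c i j) * (p i * y i)
        + ∑ i, (∑ j ∈ univ.erase i, c i j) * p i ^ 2 := by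
        gcongr 2 * ?_ + ?_
        · exact sum_le_sum fun i _ => hcross i
        · exact coupling_le_sum_mul_sq hc hcsym p
    _ = ∑ i, (∑ j ∈ univ.erase i, c i j) * (x i ^ 2 - y i ^ 2) := by
        simp only [mul_sum, ← sum_add_distrib]
        refine sum_congr rfl fun i _ => ?_
        simp only [p, Pi.sub_apply]
        ring

theorem hasDerivAt_coupling (hcsym : ∀ i j, c i j = c j i) {γ : ℝ → ι → ℝ} {γ' : ι → ℝ} {s : ℝ}
    (hγ : HasDerivAt γ γ' s) :
    HasDerivAt (fun s => coupling c (γ s))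
      (2 * ∑ i, γ' i * ∑ j ∈ univ.erase i, c i j * γ s j) s := by
  rw [hasDerivAt_pi] at hγ
  refine (HasDerivAt.fun_sum fun i _ => HasDerivAt.fun_sum fun j _ =>
    ((hγ i).const_mul (c i j)).fun_mul (hγ j)).congr_deriv ?_
  simp only [sum_add_distrib]
  rw [sum_sum_erase_comm fun i j => c i j * γ s i * γ' j]
  simp only [mul_sum, two_mul, sum_add_distrib]
  congr 1 <;> refine sum_congr rfl fun i _ => sum_congr rfl fun j _ => ?_
  · ring
  · rw [hcsym]; ring

def fiberMap (a b : ι → ℝ) (c : ι → ι → ℝ) (t : ι → ℝ) : ℝ :=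
  ∑ i, a i * t i ^ 2 - ∑ i, b i * t i ^ 6 + coupling c fun i => t i ^ 3

def fiberGrad (a b : ι → ℝ) (c : ι → ι → ℝ) (t : ι → ℝ) (i : ι) : ℝ :=
  2 * a i * t i - 6 * b i * t i ^ 5 + 6 * t i ^ 2 * ∑ j ∈ univ.erase i, c i j * t j ^ 3

variable {a b : ι → ℝ}

theorem differentiable_fiberMap : Differentiable ℝ (fiberMap a b c) := by
  unfold fiberMap coupling
  fun_prop

theorem hasDerivAt_fiberMap (hcsym : ∀ i j, c i j = c j i) {γ : ℝ → ι → ℝ} {γ' : ι → ℝ} {s : ℝ}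
    (hγ : HasDerivAt γ γ' s) :
    HasDerivAt (fun s => fiberMap a b c (γ s)) (∑ i, γ' i * fiberGrad a b c (γ s) i) s := by
  have hγi := hasDerivAt_pi.1 hγ
  have hcube : HasDerivAt (fun s i => γ s i ^ 3) (fun i => 3 * γ s i ^ 2 * γ' i) s :=
    hasDerivAt_pi.2 fun i => ((hγi i).pow 3).congr_deriv (by norm_num)
  refine (((HasDerivAt.fun_sum fun i _ => ((hγi i).pow 2).const_mul (a i)).sub
    (HasDerivAt.fun_sum fun i _ => ((hγi i).pow 6).const_mul (b i))).add
    (hasDerivAt_coupling hcsym hcube)).congr_deriv ?_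
  simp only [fiberGrad, mul_sum (s := univ), ← sum_sub_distrib, ← sum_add_distrib]
  refine sum_congr rfl fun i _ => ?_
  push_cast
  ring

theorem fiberGrad_eq_zero_of_fderiv_eq_zero (hcsym : ∀ i j, c i j = c j i) {t : ι → ℝ}
    (ht : fderiv ℝ (fiberMap a b c) t = 0) (i : ι) : fiberGrad a b c t i = 0 := by
  have hzero : HasFDerivAt (fiberMap a b c) (0 : (ι → ℝ) →L[ℝ] ℝ) (Function.update t i (t i)) := by
    rw [Function.update_eq_self, ← ht]
    exact (differentiable_fiberMap t).hasFDerivAt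
  have h := (hasDerivAt_fiberMap (a := a) (b := b) hcsym (hasDerivAt_update t i (t i))).unique
    (hzero.comp_hasDerivAt (t i) (hasDerivAt_update t i (t i)))
  simpa [Pi.single_apply] using h

theorem two_mul_sub_le_fiberGrad (hc : ∀ i j, i ≠ j → 0 ≤ c i j) {t : ι → ℝ} (ht : 0 ≤ t)
    (i : ι) : 2 * a i * t i - 6 * b i * t i ^ 5 ≤ fiberGrad a b c t i := by
  have : 0 ≤ ∑ j ∈ univ.erase i, c i j * t j ^ 3 := sum_nonneg fun j hj =>
    mul_nonneg (hc i j (ne_of_mem_erase hj).symm) (pow_nonneg (ht j) 3)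
  unfold fiberGrad
  nlinarith [sq_nonneg (t i)]

theorem fiberGrad_le_of_forall_le (hc : ∀ i j, i ≠ j → 0 ≤ c i j) {t : ι → ℝ} (ht : 0 ≤ t)
    {i : ι} (hmax : ∀ j, t j ≤ t i) :
    fiberGrad a b c t i ≤ 2 * a i * t i - 6 * (b i - ∑ j ∈ univ.erase i, c i j) * t i ^ 5 := by
  have : ∑ j ∈ univ.erase i, c i j * t j ^ 3 ≤ (∑ j ∈ univ.erase i, c i j) * t i ^ 3 := by
    rw [sum_mul]
    exact sum_le_sum fun j hj => mul_le_mul_of_nonneg_left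
      (pow_le_pow_left₀ (ht j) (hmax j) 3) (hc i j (ne_of_mem_erase hj).symm)
  unfold fiberGrad
  nlinarith [sq_nonneg (t i)]

theorem le_apply_of_fderiv_fiberMap_eq_zero (hb : ∀ i, 0 < b i) (hc : ∀ i j, i ≠ j → 0 ≤ c i j)
    (hcsym : ∀ i j, c i j = c j i) {r : ℝ} (hr : 0 ≤ r) (hra : ∀ i, 3 * b i * r ^ 4 ≤ a i)
    {t : ι → ℝ} (ht : ∀ i, 0 < t i) (hcrit : fderiv ℝ (fiberMap a b c) t = 0) (i : ι) :
    r ≤ t i := by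
  have hgrad := two_mul_sub_le_fiberGrad hc (fun j => (ht j).le) (a := a) (b := b) i
  rw [fiberGrad_eq_zero_of_fderiv_eq_zero hcsym hcrit i] at hgrad
  have hti : a i ≤ 3 * b i * t i ^ 4 := by nlinarith [ht i]
  have h4 : r ^ 4 ≤ t i ^ 4 :=
    le_of_mul_le_mul_left (by linarith [hra i]) (by linarith [hb i] : 0 < 3 * b i)
  exact (pow_le_pow_iff_left₀ hr (ht i).le four_ne_zero).1 h4

theorem apply_le_of_fderiv_fiberMap_eq_zero (hc : ∀ i j, i ≠ j → 0 ≤ c i j)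
    (hcsym : ∀ i j, c i j = c j i) {R : ℝ} (hR : 0 ≤ R)
    (hbc : ∀ i, ∑ j ∈ univ.erase i, c i j < b i)
    (hRa : ∀ i, a i ≤ 3 * (b i - ∑ j ∈ univ.erase i, c i j) * R ^ 4)
    {t : ι → ℝ} (ht : ∀ i, 0 < t i) (hcrit : fderiv ℝ (fiberMap a b c) t = 0) (i : ι) :
    t i ≤ R := by
  obtain ⟨m, -, hm⟩ := exists_max_image univ t ⟨i, mem_univ i⟩
  have hgrad := fiberGrad_le_of_forall_le hc (fun j => (ht j).le) (a := a) (b := b)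
    (fun j => hm j (mem_univ j))
  rw [fiberGrad_eq_zero_of_fderiv_eq_zero hcsym hcrit m] at hgrad
  have htm : 3 * (b m - ∑ j ∈ univ.erase m, c m j) * t m ^ 4 ≤ a m := by nlinarith [ht m]
  have h4 : t m ^ 4 ≤ R ^ 4 :=
    le_of_mul_le_mul_left (by linarith [hRa m]) (by linarith [hbc m] :
      0 < 3 * (b m - ∑ j ∈ univ.erase m, c m j))
  exact (hm i (mem_univ i)).trans ((pow_le_pow_iff_left₀ (ht m).le hR four_ne_zero).1 h4)

theorem fiberMap_le_fiberMap_max (hb : 0 ≤ b) (hc : ∀ i j, i ≠ j → 0 ≤ c i j) {r : ℝ}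
    (hra : ∀ i, 3 * b i * r ^ 4 ≤ a i) {t : ι → ℝ} (ht : 0 ≤ t) :
    fiberMap a b c t ≤ fiberMap a b c fun i => max (t i) r := by
  have hsep : ∀ i, a i * t i ^ 2 - b i * t i ^ 6
      ≤ a i * max (t i) r ^ 2 - b i * max (t i) r ^ 6 := by
    intro i
    rcases le_total r (t i) with h | h
    · rw [max_eq_left h]
    · rw [max_eq_right h]
      nlinarith [mul_pow_six_sub_le_mul_sq_sub (hb i) (ht i) h (hra i)]
  have hcube : (fun i => t i ^ 3) ≤ fun i => max (t i) r ^ 3 :=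
    fun i => pow_le_pow_left₀ (ht i) (le_max_left _ _) 3
  have hcoup := coupling_mono hc (fun i => pow_nonneg (ht i) 3) hcube
  have hsum := sum_le_sum fun i (_ : i ∈ univ) => hsep i
  simp only [sum_sub_distrib] at hsum
  unfold fiberMap
  linarith

theorem fiberMap_le_fiberMap_min (hc : ∀ i j, i ≠ j → 0 ≤ c i j) (hcsym : ∀ i j, c i j = c j i)
    {R : ℝ} (hR : 0 ≤ R) (hbc : ∀ i, ∑ j ∈ univ.erase i, c i j ≤ b i)
    (hRa : ∀ i, a i ≤ 3 * (b i - ∑ j ∈ univ.erase i, c i j) * R ^ 4) {t : ι → ℝ} (ht : 0 ≤ t) :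
    fiberMap a b c t ≤ fiberMap a b c fun i => min (t i) R := by
  set u : ι → ℝ := fun i => min (t i) R
  have hu : 0 ≤ u := fun i => le_min (ht i) hR
  have hsep : ∀ i, a i * (t i ^ 2 - u i ^ 2)
      ≤ (b i - ∑ j ∈ univ.erase i, c i j) * (t i ^ 6 - u i ^ 6) := by
    intro i
    rcases le_total (t i) R with h | h
    · simp [u, min_eq_left h]
    · simp only [u, min_eq_right h]
      exact mul_sq_sub_le_mul_pow_six_sub (sub_nonneg.2 (hbc i)) hR h (hRa i)
  have hcoup := coupling_sub_le_sum_mul_sq_sub hc hcsym (x := fun i => t i ^ 3)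
    (y := fun i => u i ^ 3) (fun i => pow_le_pow_left₀ (hu i) (min_le_left _ _) 3)
    (fun i j hlt => by
      have hR_lt : R < t i := by
        by_contra! h
        simp [u, min_eq_left h] at hlt
      simp only [u, min_eq_right hR_lt.le]
      exact pow_le_pow_left₀ (hu j) (min_le_right _ _) 3)
  have hsum := sum_le_sum fun i (_ : i ∈ univ) => hsep i
  simp only [← pow_mul, mul_sub, sub_mul, sum_sub_distrib] at hcoup hsum
  unfold fiberMap
  linarith

theorem exists_forall_fiberMap_le (hb : ∀ i, 0 < b i) (hc : ∀ i j, i ≠ j → 0 ≤ c i j)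
    (hcsym : ∀ i j, c i j = c j i) {r R : ℝ} (hr : 0 ≤ r) (hrR : r ≤ R)
    (hra : ∀ i, 3 * b i * r ^ 4 ≤ a i) (hbc : ∀ i, ∑ j ∈ univ.erase i, c i j ≤ b i)
    (hRa : ∀ i, a i ≤ 3 * (b i - ∑ j ∈ univ.erase i, c i j) * R ^ 4) :
    ∃ t₀ : ι → ℝ, (∀ i, r ≤ t₀ i ∧ t₀ i ≤ R) ∧
      ∀ t, 0 ≤ t → fiberMap a b c t ≤ fiberMap a b c t₀ := by
  obtain ⟨t₀, ht₀, hmax⟩ := (isCompact_univ_pi fun _ => isCompact_Icc).exists_isMaxOn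
    ⟨fun _ => r, fun _ _ => ⟨le_rfl, hrR⟩⟩
    (differentiable_fiberMap (a := a) (b := b) (c := c)).continuous.continuousOn
  refine ⟨t₀, fun i => ht₀ i (Set.mem_univ i), fun t ht => ?_⟩
  calc fiberMap a b c t ≤ fiberMap a b c fun i => max (t i) r :=
        fiberMap_le_fiberMap_max (fun i => (hb i).le) hc hra ht
    _ ≤ fiberMap a b c fun i => min (max (t i) r) R :=
        fiberMap_le_fiberMap_min hc hcsym (hr.trans hrR) hbc hRa
          fun i => hr.trans (le_max_right _ _)
    _ ≤ fiberMap a b c t₀ :=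
        hmax fun i _ => ⟨le_min (le_max_right _ _) hrR, min_le_right _ _⟩

end FiberMap

open FiberMap

theorem stmt_17_general {d : ℕ} (a b : Fin d → ℝ) (c : Fin d → Fin d → ℝ)
    (hb : ∀ i, 0 < b i)
    (hc0 : ∀ i j, i ≠ j → 0 ≤ c i j)
    (hcsym : ∀ i j, c i j = c j i)
    (hdom : ∀ i, 0 < 6 * b i - 6 * ∑ j ∈ Finset.univ.erase i, c i j)
    (J : (Fin d → ℝ) → ℝ)
    (hJ : J = fun t => ∑ i, a i * t i ^ 2 - ∑ i, b i * t i ^ 6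
        + ∑ i, ∑ j ∈ Finset.univ.erase i, c i j * t i ^ 3 * t j ^ 3)
    (hne : (Finset.univ : Finset (Fin d)).Nonempty)
    (r R : ℝ) (hr : 0 < r)
    (hr4 : r ^ 4 = Finset.univ.inf' hne fun i => a i / (3 * b i))
    (hR : 0 < R)
    (hRbig : ∀ i, 2 * a i * R
        - (6 * b i - 6 * ∑ j ∈ Finset.univ.erase i, c i j) * R ^ 5 < 0) :
    (∀ t : Fin d → ℝ, (∀ i, 0 < t i) → fderiv ℝ J t = 0 →
      ∀ i, r ≤ t i ∧ t i ≤ R) ∧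
    ∃ t₀ : Fin d → ℝ, (∀ i, r ≤ t₀ i ∧ t₀ i ≤ R) ∧
      ∀ t : Fin d → ℝ, (∀ i, 0 < t i) → J t ≤ J t₀ := by
  obtain rfl : J = fiberMap a b c := hJ
  have hbc : ∀ i, ∑ j ∈ univ.erase i, c i j < b i := fun i => by linarith [hdom i]
  have hra : ∀ i, 3 * b i * r ^ 4 ≤ a i := fun i => by
    have := hr4 ▸ inf'_le (fun i => a i / (3 * b i)) (mem_univ i)
    rwa [le_div_iff₀ (by linarith [hb i]), mul_comm] at this
  have hRa : ∀ i, a i ≤ 3 * (b i - ∑ j ∈ univ.erase i, c i j) * R ^ 4 := fun i => by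
    nlinarith [hRbig i, pow_pos hR 4]
  have hrR : r ≤ R := by
    obtain ⟨i, -⟩ := hne
    have hC : 0 ≤ ∑ j ∈ univ.erase i, c i j :=
      sum_nonneg fun j hj => hc0 i j (ne_of_mem_erase hj).symm
    have h4 : r ^ 4 ≤ R ^ 4 :=
      le_of_mul_le_mul_left (by nlinarith [hra i, hRa i, pow_pos hR 4])
        (by linarith [hb i] : 0 < 3 * b i)
    exact (pow_le_pow_iff_left₀ hr.le hR.le four_ne_zero).1 h4
  refine ⟨fun t ht hcrit i =>
    ⟨le_apply_of_fderiv_fiberMap_eq_zero hb hc0 hcsym hr.le hra ht hcrit i,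
      apply_le_of_fderiv_fiberMap_eq_zero hc0 hcsym hR.le hbc hRa ht hcrit i⟩, ?_⟩
  obtain ⟨t₀, ht₀, hmax⟩ :=
    exists_forall_fiberMap_le hb hc0 hcsym hr.le hrR hra (fun i => (hbc i).le) hRa
  exact ⟨t₀, ht₀, fun t ht => hmax t fun i => (ht i).le⟩

/-- Critical points of the fiber map `𝒥` lie in the box `[r,R]^d`, and `𝒥`
attains its supremum over the open positive orthant at a point of the box. -/
theorem stmt_17 {d : ℕ} (a b : Fin d → ℝ) (c : Fin d → Fin d → ℝ)
    (ha : ∀ i, 0 < a i) (hb : ∀ i, 0 < b i)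
    (hc0 : ∀ i j, i ≠ j → 0 ≤ c i j)
    (hcsym : ∀ i j, c i j = c j i)
    (hdom : ∀ i, 0 < 6 * b i - 6 * ∑ j ∈ Finset.univ.erase i, c i j)
    (J : (Fin d → ℝ) → ℝ)
    (hJ : J = fun t => ∑ i, a i * t i ^ 2 - ∑ i, b i * t i ^ 6
        + ∑ i, ∑ j ∈ Finset.univ.erase i, c i j * t i ^ 3 * t j ^ 3)
    (hne : (Finset.univ : Finset (Fin d)).Nonempty)
    (r R : ℝ) (hr : 0 < r)
    (hr4 : r ^ 4 = Finset.univ.inf' hne fun i => a i / (3 * b i))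
    (hR : 0 < R)
    (hRbig : ∀ i, 2 * a i * R
        - (6 * b i - 6 * ∑ j ∈ Finset.univ.erase i, c i j) * R ^ 5 < 0) :
    (∀ t : Fin d → ℝ, (∀ i, 0 < t i) → fderiv ℝ J t = 0 →
      ∀ i, r ≤ t i ∧ t i ≤ R) ∧
    ∃ t₀ : Fin d → ℝ, (∀ i, r ≤ t₀ i ∧ t₀ i ≤ R) ∧
      ∀ t : Fin d → ℝ, (∀ i, 0 < t i) → J t ≤ J t₀ :=
  stmt_17_general a b c hb hc0 hcsym hdom J hJ hne r R hr hr4 hR hRbig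
end
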